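/- Let G be a group generated by a finite symmetric set S, with balls B_G(r) and right-invariant word metric d_G. Let η, r > 0, let F ⊆ G be an (η,r)-Følner set, and let F = F_1 ∪ … ∪ F_k be its partition into maximal (2r)-connected subsets. Then there exists an index i with 1 ≤ i ≤ k such that |(B_G(r)·F_i) \ F_i| ≤ η |F_i|, i.e. some maximal (2r)-connected component of F is itself (η,r)-Følner. -/

import Mathlib

open scoped Pointwise

/-- The word length of `g` with respect to the generating set `S`. -/
noncomputable def wordLength {G : Type*} [Group G] (S : Set G) (g : G) : ℕ :=
  sInf {n | ∃ l : List G, l.length = n ∧ (∀ s ∈ l, s ∈ S) ∧ l.prod = g}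

/-- The right-invariant word metric `d_G(g,h) = |g h⁻¹|_G`. -/
noncomputable def wordDist {G : Type*} [Group G] (S : Set G) (g h : G) : ℕ :=
  wordLength S (g * h⁻¹)

/-- The ball `B_G(r) = {g : |g|_G ≤ r}`. -/
def wordBall {G : Type*} [Group G] (S : Set G) (r : ℝ) : Set G :=
  {g : G | (wordLength S g : ℝ) ≤ r}

/-- `F` is an (ε,r)-Følner set: finite, nonempty, with `|(B_G(r)·F) \ F| ≤ ε|F|`. -/
def IsFolner {G : Type*} [Group G] (S : Set G) (ε r : ℝ) (F : Set G) : Prop :=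
  F.Finite ∧ F.Nonempty ∧
    (((wordBall S r * F) \ F).ncard : ℝ) ≤ ε * (F.ncard : ℝ)

/-- `E` is r-connected for the word metric. -/
def RConnected {G : Type*} [Group G] (S : Set G) (r : ℝ) (E : Set G) : Prop :=
  ∀ g ∈ E, ∀ h ∈ E, Relation.ReflTransGen
    (fun a b => a ∈ E ∧ b ∈ E ∧ (wordDist S a b : ℝ) ≤ r) g h


open Function

/-! By maximality, distinct components of `F` are more than `2r` apart: otherwise their union
would be a larger `2r`-connected subset of `F`. Hence the outer `r`-boundary
`∂F_i = B(r)F_i \ F_i` of a component lies in `∂F`, and the boundaries of distinct components are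
disjoint, since a common point would lie within `r` of both. Summing,
`∑ |∂F_i| ≤ |∂F| ≤ η |F| = ∑ η |F_i|`, so some term satisfies `|∂F_i| ≤ η |F_i|`. -/

section WordMetric

variable {G : Type*} [Group G] {S : Set G}

theorem Subgroup.closure_toSubmonoid_of_inv_mem (hSsym : ∀ s ∈ S, s⁻¹ ∈ S) :
    (Subgroup.closure S).toSubmonoid = Submonoid.closure S := by
  rw [Subgroup.closure_toSubmonoid, Set.union_eq_left.2 fun s hs => by simpa using hSsym _ hs]

theorem wordLength_le_length {l : List G} (hl : ∀ s ∈ l, s ∈ S) :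
    wordLength S l.prod ≤ l.length :=
  Nat.sInf_le ⟨l, rfl, hl, rfl⟩

theorem exists_list_length_eq_wordLength (hS : Submonoid.closure S = ⊤) (g : G) :
    ∃ l : List G, l.length = wordLength S g ∧ (∀ s ∈ l, s ∈ S) ∧ l.prod = g := by
  obtain ⟨l, hl, hg⟩ := Submonoid.exists_list_of_mem_closure (hS ▸ Submonoid.mem_top g)
  exact Nat.sInf_mem (s := {n | ∃ l : List G, l.length = n ∧ (∀ s ∈ l, s ∈ S) ∧ l.prod = g})
    ⟨l.length, l, rfl, hl, hg⟩

theorem wordLength_mul_le (hS : Submonoid.closure S = ⊤) (g h : G) :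
    wordLength S (g * h) ≤ wordLength S g + wordLength S h := by
  obtain ⟨l, hl, hlS, rfl⟩ := exists_list_length_eq_wordLength hS g
  obtain ⟨l', hl', hl'S, rfl⟩ := exists_list_length_eq_wordLength hS h
  rw [← hl, ← hl', ← List.length_append, ← List.prod_append]
  exact wordLength_le_length fun s hs => (List.mem_append.1 hs).elim (hlS s) (hl'S s)

theorem wordLength_inv_le (hS : Submonoid.closure S = ⊤) (hSsym : ∀ s ∈ S, s⁻¹ ∈ S)
    (g : G) : wordLength S g⁻¹ ≤ wordLength S g := by
  obtain ⟨l, hl, hlS, rfl⟩ := exists_list_length_eq_wordLength hS g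
  rw [← hl, List.prod_inv_reverse, ← List.length_map (f := fun x : G => x⁻¹), ← List.length_reverse]
  refine wordLength_le_length fun s hs => ?_
  obtain ⟨a, ha, rfl⟩ := List.mem_map.1 (List.mem_reverse.1 hs)
  exact hSsym a (hlS a ha)

theorem wordLength_inv (hS : Submonoid.closure S = ⊤) (hSsym : ∀ s ∈ S, s⁻¹ ∈ S)
    (g : G) : wordLength S g⁻¹ = wordLength S g :=
  (wordLength_inv_le hS hSsym g).antisymm (by simpa using wordLength_inv_le hS hSsym g⁻¹)

theorem wordDist_comm (hS : Submonoid.closure S = ⊤) (hSsym : ∀ s ∈ S, s⁻¹ ∈ S)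
    (g h : G) : wordDist S g h = wordDist S h g := by
  rw [wordDist, wordDist, ← wordLength_inv hS hSsym, mul_inv_rev, inv_inv]

theorem wordDist_triangle (hS : Submonoid.closure S = ⊤) (g x h : G) :
    wordDist S g h ≤ wordDist S g x + wordDist S x h := by
  simpa [wordDist, mul_assoc] using wordLength_mul_le hS (g * x⁻¹) (x * h⁻¹)

theorem wordBall_finite (hS : Submonoid.closure S = ⊤) (hSfin : S.Finite) (r : ℝ) :
    (wordBall S r).Finite := by
  have : Finite S := hSfin.to_subtype
  refine ((List.finite_length_le S ⌊r⌋₊).image fun l => (l.map (↑)).prod).subset ?_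
  intro g hg
  obtain ⟨l, hl, hlS, rfl⟩ := exists_list_length_eq_wordLength hS g
  lift l to List S using hlS
  have hlen := Nat.le_floor (α := ℝ) hg
  rw [← hl, List.length_map] at hlen
  exact ⟨l, hlen, rfl⟩

end WordMetric

theorem mem_wordBall_mul_iff {G : Type*} [Group G] {S : Set G} {r : ℝ} {E : Set G} {x : G} :
    x ∈ wordBall S r * E ↔ ∃ f ∈ E, (wordDist S x f : ℝ) ≤ r := by
  simp only [Set.mem_mul, wordBall, Set.mem_ofPred_eq, wordDist]
  constructor
  · rintro ⟨b, hb, f, hf, rfl⟩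
    exact ⟨f, hf, by simpa [mul_assoc] using hb⟩
  · rintro ⟨f, hf, hd⟩
    exact ⟨x * f⁻¹, hd, f, hf, by group⟩

theorem RConnected.union {G : Type*} [Group G] {S : Set G} {r : ℝ} {E E' : Set G}
    (hE : RConnected S r E) (hE' : RConnected S r E') {a b : G} (ha : a ∈ E) (hb : b ∈ E')
    (hab : (wordDist S a b : ℝ) ≤ r) (hba : (wordDist S b a : ℝ) ≤ r) :
    RConnected S r (E ∪ E') := by
  let R (x y : G) : Prop := x ∈ E ∪ E' ∧ y ∈ E ∪ E' ∧ (wordDist S x y : ℝ) ≤ r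
  have chain {D : Set G} (hD : D ⊆ E ∪ E') (hconn : RConnected S r D) ⦃g h : G⦄ (hg : g ∈ D)
      (hh : h ∈ D) : Relation.ReflTransGen R g h :=
    Relation.ReflTransGen.mono (fun _ _ hxy => ⟨hD hxy.1, hD hxy.2.1, hxy.2.2⟩) _ _
      (hconn g hg h hh)
  have inE := chain Set.subset_union_left hE
  have inE' := chain Set.subset_union_right hE'
  have hab' : Relation.ReflTransGen R a b := .single ⟨.inl ha, .inr hb, hab⟩
  have hba' : Relation.ReflTransGen R b a := .single ⟨.inr hb, .inl ha, hba⟩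
  rintro g (hg | hg) h (hh | hh)
  · exact inE hg hh
  · exact ((inE hg ha).trans hab').trans (inE' hb hh)
  · exact ((inE' hg hb).trans hba').trans (inE ha hh)
  · exact inE' hg hh

theorem exists_ncard_le_mul_ncard_of_ncard_iUnion_le {ι α : Type*} [Fintype ι] [Nonempty ι]
    {A B : ι → Set α} (hA : ∀ i, (A i).Finite) (hB : ∀ i, (B i).Finite)
    (hAd : Pairwise (Disjoint on A)) (hBd : Pairwise (Disjoint on B)) {η : ℝ}
    (h : ((⋃ i, B i).ncard : ℝ) ≤ η * (⋃ i, A i).ncard) :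
    ∃ i, ((B i).ncard : ℝ) ≤ η * (A i).ncard := by
  rw [Set.ncard_iUnion_of_finite hA hAd, Set.ncard_iUnion_of_finite hB hBd,
    finsum_eq_sum_of_fintype, finsum_eq_sum_of_fintype] at h
  push_cast at h
  rw [Finset.mul_sum] at h
  obtain ⟨i, -, hi⟩ := Finset.exists_le_of_sum_le Finset.univ_nonempty h
  exact ⟨i, hi⟩

section Components

variable {G : Type*} [Group G] {S : Set G} {ι : Type*} {comp : ι → Set G} {F : Set G} {r : ℝ}

theorem eq_of_wordDist_le_of_maximal (hS : Submonoid.closure S = ⊤) (hSsym : ∀ s ∈ S, s⁻¹ ∈ S)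
    (hsub : ∀ i, comp i ⊆ F) (hdisj : Pairwise (Disjoint on comp))
    (hconn : ∀ i, RConnected S r (comp i))
    (hmax : ∀ i, ∀ E' : Set G, comp i ⊆ E' → E' ⊆ F → RConnected S r E' → E' = comp i)
    {i j : ι} {f f' : G} (hf : f ∈ comp i) (hf' : f' ∈ comp j)
    (hd : (wordDist S f f' : ℝ) ≤ r) : i = j := by
  by_contra hij
  have hd' : (wordDist S f' f : ℝ) ≤ r := by rwa [wordDist_comm hS hSsym]
  have hunion := hmax i _ Set.subset_union_left (Set.union_subset (hsub i) (hsub j))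
    ((hconn i).union (hconn j) hf hf' hd hd')
  exact Set.disjoint_left.1 (hdisj hij) (hunion ▸ Set.mem_union_right _ hf') hf'

def wordBoundary (S : Set G) (r : ℝ) (E : Set G) : Set G :=
  (wordBall S r * E) \ E

theorem wordBoundary_subset_of_separated (hsep : ∀ ⦃i j⦄ ⦃f f' : G⦄, f ∈ comp i → f' ∈ comp j →
      (wordDist S f f' : ℝ) ≤ 2 * r → i = j)
    (hcover : ⋃ i, comp i = F) (i : ι) : wordBoundary S r (comp i) ⊆ wordBoundary S r F := by
  rintro x ⟨hx, hxi⟩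
  obtain ⟨f, hf, hd⟩ := mem_wordBall_mul_iff.1 hx
  refine ⟨Set.mul_subset_mul_left (hcover ▸ Set.subset_iUnion comp i) hx, fun hxF => ?_⟩
  obtain ⟨j, hxj⟩ := Set.mem_iUnion.1 (hcover ▸ hxF)
  obtain rfl := hsep hxj hf (by linarith [(wordDist S x f).cast_nonneg (α := ℝ)])
  exact hxi hxj

theorem pairwise_disjoint_wordBoundary_of_separated (hS : Submonoid.closure S = ⊤)
    (hSsym : ∀ s ∈ S, s⁻¹ ∈ S) (hsep : ∀ ⦃i j⦄ ⦃f f' : G⦄, f ∈ comp i → f' ∈ comp j →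
      (wordDist S f f' : ℝ) ≤ 2 * r → i = j) :
    Pairwise (Disjoint on fun i => wordBoundary S r (comp i)) := by
  intro i j hij
  refine Set.disjoint_left.2 fun x hxi hxj => hij ?_
  obtain ⟨f, hf, hd⟩ := mem_wordBall_mul_iff.1 hxi.1
  obtain ⟨f', hf', hd'⟩ := mem_wordBall_mul_iff.1 hxj.1
  refine hsep hf hf' ?_
  calc (wordDist S f f' : ℝ) ≤ wordDist S f x + wordDist S x f' := by
        exact_mod_cast wordDist_triangle hS f x f'
    _ ≤ 2 * r := by rw [wordDist_comm hS hSsym f x]; linarith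

end Components

theorem stmt16_general {G : Type*} [Group G] (S : Set G) (hSfin : S.Finite)
    (hSsym : ∀ s ∈ S, s⁻¹ ∈ S) (hSgen : Subgroup.closure S = ⊤)
    {η r : ℝ}
    (F : Set G) (hF : IsFolner S η r F)
    -- the partition of F into maximal (2r)-connected subsets F_1, …, F_k
    (k : ℕ) (comp : Fin k → Set G)
    (hcover : (⋃ i, comp i) = F)
    (hdisj : ∀ i j, i ≠ j → Disjoint (comp i) (comp j))
    (hconn : ∀ i, RConnected S (2 * r) (comp i))
    (hmax : ∀ i, ∀ E' : Set G, comp i ⊆ E' → E' ⊆ F →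
      RConnected S (2 * r) E' → E' = comp i) :
    -- some component is itself (η,r)-Følner
    ∃ i, (((wordBall S r * comp i) \ comp i).ncard : ℝ) ≤ η * ((comp i).ncard : ℝ) := by
  obtain ⟨hFfin, ⟨x, hx⟩, hFfolner⟩ := hF
  have hS : Submonoid.closure S = ⊤ := by
    rw [← Subgroup.closure_toSubmonoid_of_inv_mem hSsym, hSgen, Subgroup.top_toSubmonoid]
  have hsub (i : Fin k) : comp i ⊆ F := hcover ▸ Set.subset_iUnion comp i
  have hsep : ∀ ⦃i j⦄ ⦃f f' : G⦄, f ∈ comp i → f' ∈ comp j →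
      (wordDist S f f' : ℝ) ≤ 2 * r → i = j :=
    fun _ _ _ _ => eq_of_wordDist_le_of_maximal hS hSsym hsub hdisj hconn hmax
  have hbdry := wordBoundary_subset_of_separated hsep hcover
  have hbdryF : (wordBoundary S r F).Finite := ((wordBall_finite hS hSfin r).mul hFfin).sdiff
  obtain ⟨i, -⟩ := Set.mem_iUnion.1 (hcover ▸ hx)
  have : Nonempty (Fin k) := ⟨i⟩
  refine exists_ncard_le_mul_ncard_of_ncard_iUnion_le (fun i => hFfin.subset (hsub i))
    (fun i => hbdryF.subset (hbdry i)) hdisj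
    (pairwise_disjoint_wordBoundary_of_separated hS hSsym hsep) ?_
  rw [hcover]
  exact (Nat.cast_le.2 (Set.ncard_le_ncard (Set.iUnion_subset hbdry) hbdryF)).trans hFfolner

theorem stmt16 {G : Type*} [Group G] (S : Set G) (hSfin : S.Finite)
    (hSsym : ∀ s ∈ S, s⁻¹ ∈ S) (hSgen : Subgroup.closure S = ⊤)
    {η r : ℝ} (hη : 0 < η) (hr : 0 < r)
    (F : Set G) (hF : IsFolner S η r F)
    -- the partition of F into maximal (2r)-connected subsets F_1, …, F_k
    (k : ℕ) (comp : Fin k → Set G)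
    (hcover : (⋃ i, comp i) = F)
    (hdisj : ∀ i j, i ≠ j → Disjoint (comp i) (comp j))
    (hne : ∀ i, (comp i).Nonempty)
    (hconn : ∀ i, RConnected S (2 * r) (comp i))
    (hmax : ∀ i, ∀ E' : Set G, comp i ⊆ E' → E' ⊆ F →
      RConnected S (2 * r) E' → E' = comp i) :
    -- some component is itself (η,r)-Følner
    ∃ i, (((wordBall S r * comp i) \ comp i).ncard : ℝ) ≤ η * ((comp i).ncard : ℝ) :=
  stmt16_general S hSfin hSsym hSgen F hF k comp hcover hdisj hconn hmax
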